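/- arXiv:math/0210275 — 5 statements merged into one kernel-verified Lean document; each statement's English description precedes it below -/
import Mathlib

section
/- Let n be an odd positive integer and let α₁, α₂, α₃ be integers satisfying conditions (2.9). Define C : (ZMod n)³ → ZMod n by C(i,j,k) = α₁·i + α₂·j + α₃·k. Then C is a pandiagonal Latin cube: for every direction vector d = (d₁,d₂,d₃) with each dᵢ ∈ {−1,0,1} and d ≠ (0,0,0), and every point p ∈ (ZMod n)³, the map t ↦ C(p + t·d) is a bijection of ZMod n. -/
/-- Conditions (2.9) on the parameters `α₁, α₂, α₃` of a linear cube modulo `n`,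
with `A = α₁ + α₂ + α₃`. -/
def Cond29 (n : ℕ) (α₁ α₂ α₃ : ℤ) : Prop :=
  Int.gcd α₁ n = 1 ∧ Int.gcd α₂ n = 1 ∧ Int.gcd α₃ n = 1 ∧
  Int.gcd (α₁ + α₂) n = 1 ∧ Int.gcd (α₁ + α₃) n = 1 ∧ Int.gcd (α₂ + α₃) n = 1 ∧
  Int.gcd (α₁ - α₂) n = 1 ∧ Int.gcd (α₁ - α₃) n = 1 ∧ Int.gcd (α₂ - α₃) n = 1 ∧
  Int.gcd (α₁ + α₂ + α₃) n = 1 ∧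
  Int.gcd (α₁ + α₂ + α₃ - 2 * α₁) n = 1 ∧
  Int.gcd (α₁ + α₂ + α₃ - 2 * α₂) n = 1 ∧
  Int.gcd (α₁ + α₂ + α₃ - 2 * α₃) n = 1

theorem ZMod.isUnit_intCast_of_gcd_eq_one {n : ℕ} {a : ℤ} (h : Int.gcd a n = 1) :
    IsUnit (a : ZMod n) :=
  (ZMod.unitOfIsCoprime a (Int.isCoprime_iff_gcd_eq_one.mpr h)).isUnit

theorem IsUnit.of_eq_or_eq_neg {R : Type*} [Ring R] {a b : R} (ha : IsUnit a)
    (hb : b = a ∨ b = -a) : IsUnit b := by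
  rcases hb with rfl | rfl
  exacts [ha, ha.neg]

theorem bijective_add_mul_of_isUnit {R : Type*} [Ring R] (c : R) {m : R} (hm : IsUnit m) :
    Function.Bijective (fun t : R => c + t * m) := by
  obtain ⟨u, rfl⟩ := hm
  exact (Equiv.addLeft c).bijective.comp (Units.mulRight u).bijective

theorem bijective_linear_form_along_line {R : Type*} [CommRing R] (a₁ a₂ a₃ p₁ p₂ p₃ d₁ d₂ d₃ : R)
    (hd : IsUnit (a₁ * d₁ + a₂ * d₂ + a₃ * d₃)) :
    Function.Bijective (fun t : R =>
      a₁ * (p₁ + t * d₁) + a₂ * (p₂ + t * d₂) + a₃ * (p₃ + t * d₃)) := by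
  convert bijective_add_mul_of_isUnit (a₁ * p₁ + a₂ * p₂ + a₃ * p₃) hd using 2 with t
  ring

theorem Cond29.isUnit_dot_direction {n : ℕ} {α₁ α₂ α₃ : ℤ} (h : Cond29 n α₁ α₂ α₃)
    {d₁ d₂ d₃ : ZMod n} (hd₁ : d₁ ∈ ({-1, 0, 1} : Set (ZMod n)))
    (hd₂ : d₂ ∈ ({-1, 0, 1} : Set (ZMod n))) (hd₃ : d₃ ∈ ({-1, 0, 1} : Set (ZMod n)))
    (hne : ¬ (d₁ = 0 ∧ d₂ = 0 ∧ d₃ = 0)) :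
    IsUnit ((α₁ : ZMod n) * d₁ + (α₂ : ZMod n) * d₂ + (α₃ : ZMod n) * d₃) := by
  have U {a : ℤ} : Int.gcd a n = 1 → IsUnit (a : ZMod n) := ZMod.isUnit_intCast_of_gcd_eq_one
  obtain ⟨h1, h2, h3, h12, h13, h23, hm12, hm13, hm23, hA, hA1, hA2, hA3⟩ := h
  -- up to sign, the 26 nonzero directions give exactly the 13 quantities of (2.9)
  rcases hd₁ with rfl | rfl | rfl <;> rcases hd₂ with rfl | rfl | rfl <;>
    rcases hd₃ with rfl | rfl | rfl
  · exact (U hA).of_eq_or_eq_neg (.inr (by push_cast; ring))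
  · exact (U h12).of_eq_or_eq_neg (.inr (by push_cast; ring))
  · exact (U hA3).of_eq_or_eq_neg (.inr (by push_cast; ring))
  · exact (U h13).of_eq_or_eq_neg (.inr (by push_cast; ring))
  · exact (U h1).of_eq_or_eq_neg (.inr (by ring))
  · exact (U hm13).of_eq_or_eq_neg (.inr (by push_cast; ring))
  · exact (U hA2).of_eq_or_eq_neg (.inr (by push_cast; ring))
  · exact (U hm12).of_eq_or_eq_neg (.inr (by push_cast; ring))
  · exact (U hA1).of_eq_or_eq_neg (.inl (by push_cast; ring))
  · exact (U h23).of_eq_or_eq_neg (.inr (by push_cast; ring))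
  · exact (U h2).of_eq_or_eq_neg (.inr (by ring))
  · exact (U hm23).of_eq_or_eq_neg (.inr (by push_cast; ring))
  · exact (U h3).of_eq_or_eq_neg (.inr (by ring))
  · exact absurd ⟨rfl, rfl, rfl⟩ hne
  · exact (U h3).of_eq_or_eq_neg (.inl (by ring))
  · exact (U hm23).of_eq_or_eq_neg (.inl (by push_cast; ring))
  · exact (U h2).of_eq_or_eq_neg (.inl (by ring))
  · exact (U h23).of_eq_or_eq_neg (.inl (by push_cast; ring))
  · exact (U hA1).of_eq_or_eq_neg (.inr (by push_cast; ring))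
  · exact (U hm12).of_eq_or_eq_neg (.inl (by push_cast; ring))
  · exact (U hA2).of_eq_or_eq_neg (.inl (by push_cast; ring))
  · exact (U hm13).of_eq_or_eq_neg (.inl (by push_cast; ring))
  · exact (U h1).of_eq_or_eq_neg (.inl (by ring))
  · exact (U h13).of_eq_or_eq_neg (.inl (by push_cast; ring))
  · exact (U hA3).of_eq_or_eq_neg (.inl (by push_cast; ring))
  · exact (U h12).of_eq_or_eq_neg (.inl (by push_cast; ring))
  · exact (U hA).of_eq_or_eq_neg (.inl (by push_cast; ring))

theorem linear_cube_is_pandiagonal_latin_general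
    (n : ℕ) (α₁ α₂ α₃ : ℤ) (h : Cond29 n α₁ α₂ α₃) :
    ∀ d₁ d₂ d₃ : ZMod n,
      d₁ ∈ ({-1, 0, 1} : Set (ZMod n)) →
      d₂ ∈ ({-1, 0, 1} : Set (ZMod n)) →
      d₃ ∈ ({-1, 0, 1} : Set (ZMod n)) →
      ¬ (d₁ = 0 ∧ d₂ = 0 ∧ d₃ = 0) →
      ∀ p₁ p₂ p₃ : ZMod n,
        Function.Bijective (fun t : ZMod n =>
          (α₁ : ZMod n) * (p₁ + t * d₁) + (α₂ : ZMod n) * (p₂ + t * d₂) +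
            (α₃ : ZMod n) * (p₃ + t * d₃)) :=
  fun _ _ _ hd₁ hd₂ hd₃ hne _ _ _ =>
    bijective_linear_form_along_line _ _ _ _ _ _ _ _ _ (h.isUnit_dot_direction hd₁ hd₂ hd₃ hne)

/-- **Theorem 2.5.** For odd `n` and `α₁, α₂, α₃` satisfying
conditions (2.9), the cube `C(i,j,k) = α₁i + α₂j + α₃k` is a pandiagonal Latin cube:
along every line with direction a nonzero vector in `{-1,0,1}³`, the values of `C`
form a bijection of `ZMod n`. -/
theorem linear_cube_is_pandiagonal_latin
    (n : ℕ) (hodd : Odd n) (α₁ α₂ α₃ : ℤ) (h : Cond29 n α₁ α₂ α₃) :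
    ∀ d₁ d₂ d₃ : ZMod n,
      d₁ ∈ ({-1, 0, 1} : Set (ZMod n)) →
      d₂ ∈ ({-1, 0, 1} : Set (ZMod n)) →
      d₃ ∈ ({-1, 0, 1} : Set (ZMod n)) →
      ¬ (d₁ = 0 ∧ d₂ = 0 ∧ d₃ = 0) →
      ∀ p₁ p₂ p₃ : ZMod n,
        Function.Bijective (fun t : ZMod n =>
          (α₁ : ZMod n) * (p₁ + t * d₁) + (α₂ : ZMod n) * (p₂ + t * d₂) +
            (α₃ : ZMod n) * (p₃ + t * d₃)) :=
  linear_cube_is_pandiagonal_latin_general n α₁ α₂ α₃ h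
end

section
/- For each n ∈ {3, 5, 7, 9}, there exists no triple of integers (α₁, α₂, α₃) with 1 ≤ αᵢ ≤ n−1 satisfying conditions (2.9). Hence the linear construction yields no pandiagonal Latin cube of odd order n < 11. -/
/-- For `n ∈ {3,5,7,9}` there is no triple `(α₁,α₂,α₃)` of integers
with `1 ≤ αᵢ ≤ n-1` satisfying conditions (2.9); so the linear construction yields no
pandiagonal Latin cube of odd order `n < 11`. -/
theorem no_pandiagonal_cube_parameters_below_eleven :
    ∀ n : ℕ, n ∈ ({3, 5, 7, 9} : Set ℕ) →
      ¬ ∃ α₁ α₂ α₃ : ℤ,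
          (1 ≤ α₁ ∧ α₁ ≤ (n : ℤ) - 1) ∧
          (1 ≤ α₂ ∧ α₂ ≤ (n : ℤ) - 1) ∧
          (1 ≤ α₃ ∧ α₃ ≤ (n : ℤ) - 1) ∧
          Cond29 n α₁ α₂ α₃ := by
  intro n hn
  rintro ⟨a, b, c, ⟨ha1, ha2⟩, ⟨hb1, hb2⟩, ⟨hc1, hc2⟩, h⟩
  unfold Cond29 at h
  simp only [Set.mem_insert_iff, Set.mem_singleton_iff] at hn
  rcases hn with rfl | rfl | rfl | rfl <;>
    · push_cast at ha2 hb2 hc2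
      interval_cases a <;> interval_cases b <;> interval_cases c <;>
        revert h <;> decide
end

section
/- Let n be an odd positive integer and let α₁, α₂, α₃, α₄ be integers satisfying conditions (2.14). Define H : (ZMod n)⁴ → ZMod n by H(i,j,k,ℓ) = α₁·i + α₂·j + α₃·k + α₄·ℓ. Then H is a four-dimensional pandiagonal Latin cube: for every direction vector d = (d₁,d₂,d₃,d₄) with each dᵢ ∈ {−1,0,1} and d ≠ (0,0,0,0), and every point p ∈ (ZMod n)⁴, the map t ↦ H(p + t·d) is a bijection of ZMod n. -/
/-- Conditions (2.14) on the parameters `α₁, α₂, α₃, α₄` of a linear hypercube modulo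
`n`, with `B = α₁ + α₂ + α₃ + α₄`. -/
def Cond214 (n : ℕ) (α₁ α₂ α₃ α₄ : ℤ) : Prop :=
  let a : Fin 4 → ℤ := ![α₁, α₂, α₃, α₄]
  let B : ℤ := α₁ + α₂ + α₃ + α₄
  (∀ m, Int.gcd (a m) n = 1) ∧
  (∀ m m', m ≠ m' → Int.gcd (a m + a m') n = 1) ∧
  (∀ m m', m ≠ m' → Int.gcd (a m - a m') n = 1) ∧
  Int.gcd B n = 1 ∧
  (∀ m, Int.gcd (B - a m) n = 1) ∧
  (∀ m, Int.gcd (B - 2 * a m) n = 1) ∧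
  (∀ m m', m ≠ m' → Int.gcd (B - a m' - 2 * a m) n = 1) ∧
  (∀ m m', m ≠ m' → Int.gcd (B - 2 * a m' - 2 * a m) n = 1)

/-!
Along the line `p + t d` the hypercube takes the values `H(p) + t ⟨α, d⟩`, so the line is
Latin as soon as `⟨α, d⟩` is a unit modulo `n`. Up to a global sign, every nonzero
`d ∈ {-1,0,1}⁴` takes a value `x` at one coordinate `m`, a value `y` at a second coordinate
`m'` and a common value `z` at the remaining two, with `(x, y, z)` one of eight patterns; for
each pattern, `⟨α, d⟩ = x αₘ + y αₘ' + z (B - αₘ - αₘ')` is one of the quantities that (2.14)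
requires to be coprime to `n`.
-/

open Function

lemma bijective_add_mul_right_of_isUnit {R : Type*} [Ring R] {u : R} (hu : IsUnit u)
    (c : R) : Bijective fun t => c + t * u :=
  ((Units.mulRight hu.unit).trans (Equiv.addLeft c)).bijective

lemma exists_signType_cast_eq {R : Type*} [Ring R] {d : R}
    (hd : d ∈ ({-1, 0, 1} : Set R)) : ∃ s : SignType, (s : R) = d := by
  rcases hd with rfl | rfl | rfl
  exacts [⟨-1, SignType.coe_neg_one⟩, ⟨0, SignType.coe_zero⟩, ⟨1, SignType.coe_one⟩]

section DotProduct

variable {ι R : Type*} [Fintype ι] [DecidableEq ι]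

lemma dotProduct_update [NonUnitalNonAssocRing R] (a v : ι → R) (m : ι) (x : R) :
    a ⬝ᵥ update v m x = a ⬝ᵥ v + a m * (x - v m) := by
  have : update v m x = v + Pi.single m (x - v m) := by
    ext i
    rcases eq_or_ne i m with rfl | hi <;> simp [*]
  rw [this, dotProduct_add, dotProduct_single]

lemma dotProduct_update_update_const [CommRing R] (a : ι → R) {m m' : ι} (hm : m ≠ m')
    (x y z : R) :
    a ⬝ᵥ update (update (const ι z) m' y) m x =
      x * a m + y * a m' + z * (∑ i, a i - a m - a m') := by
  rw [dotProduct_update, dotProduct_update, update_of_ne hm]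
  simp only [dotProduct, const_apply, ← Finset.sum_mul]
  ring

end DotProduct

/-- The values `(x, y, z)` at `m`, at `m'` and at the other two coordinates of the directions
whose linear forms occur in (2.14). -/
def cond214Patterns : List (SignType × SignType × SignType) :=
  [(1, 0, 0), (1, 1, 0), (1, -1, 0), (1, 1, 1), (0, 1, 1), (-1, 1, 1), (-1, 0, 1), (-1, -1, 1)]

lemma exists_cond214Pattern : ∀ e : Fin 4 → SignType, e ≠ 0 →
    ∃ m m' : Fin 4, m ≠ m' ∧ ∃ v ∈ cond214Patterns,
      e = update (update (const _ v.2.2) m' v.2.1) m v.1 ∨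
        -e = update (update (const _ v.2.2) m' v.2.1) m v.1 := by
  decide

namespace Cond214

variable {n : ℕ} {α₁ α₂ α₃ α₄ : ℤ}

lemma gcd_dotProduct_pattern_eq_one (h : Cond214 n α₁ α₂ α₃ α₄) {m m' : Fin 4}
    (hm : m ≠ m') {x y z : SignType} (hv : (x, y, z) ∈ cond214Patterns) :
    Int.gcd (![α₁, α₂, α₃, α₄] ⬝ᵥ (SignType.cast ∘ update (update (const _ z) m' y) m x)) n
      = 1 := by
  obtain ⟨h₁, h₂, h₃, h₄, h₅, h₆, h₇, h₈⟩ := h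
  have hB : ∑ i, ![α₁, α₂, α₃, α₄] i = α₁ + α₂ + α₃ + α₄ := by simp [Fin.sum_univ_four]
  rw [comp_update, comp_update, comp_const, dotProduct_update_update_const _ hm, hB]
  simp only [cond214Patterns, List.mem_cons, List.not_mem_nil, or_false, Prod.mk.injEq]
    at hv
  rcases hv with ⟨rfl, rfl, rfl⟩ | ⟨rfl, rfl, rfl⟩ | ⟨rfl, rfl, rfl⟩ | ⟨rfl, rfl, rfl⟩ |
    ⟨rfl, rfl, rfl⟩ | ⟨rfl, rfl, rfl⟩ | ⟨rfl, rfl, rfl⟩ | ⟨rfl, rfl, rfl⟩ <;>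
    simp only [SignType.coe_zero, SignType.coe_one, SignType.coe_neg_one]
  · convert h₁ m using 2; ring
  · convert h₂ m m' hm using 2; ring
  · convert h₃ m m' hm using 2; ring
  · convert h₄ using 2; ring
  · convert h₅ m using 2; ring
  · convert h₆ m using 2; ring
  · convert h₇ m m' hm using 2; ring
  · convert h₈ m m' hm using 2; ring

lemma gcd_dotProduct_eq_one (h : Cond214 n α₁ α₂ α₃ α₄) {e : Fin 4 → SignType}
    (he : e ≠ 0) :
    Int.gcd (![α₁, α₂, α₃, α₄] ⬝ᵥ (SignType.cast ∘ e)) n = 1 := by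
  obtain ⟨m, m', hm, ⟨x, y, z⟩, hv, hpos | hneg⟩ := exists_cond214Pattern e he
  · rw [hpos]
    exact h.gcd_dotProduct_pattern_eq_one hm hv
  · have : SignType.cast ∘ e = -(SignType.cast ∘ (-e) : Fin 4 → ℤ) := by
      ext i
      simp
    rw [this, dotProduct_neg, Int.neg_gcd, hneg]
    exact h.gcd_dotProduct_pattern_eq_one hm hv

end Cond214

theorem linear_hypercube_is_pandiagonal_latin_general
    (n : ℕ) (α₁ α₂ α₃ α₄ : ℤ) (h : Cond214 n α₁ α₂ α₃ α₄) :
    ∀ d₁ d₂ d₃ d₄ : ZMod n,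
      d₁ ∈ ({-1, 0, 1} : Set (ZMod n)) →
      d₂ ∈ ({-1, 0, 1} : Set (ZMod n)) →
      d₃ ∈ ({-1, 0, 1} : Set (ZMod n)) →
      d₄ ∈ ({-1, 0, 1} : Set (ZMod n)) →
      ¬ (d₁ = 0 ∧ d₂ = 0 ∧ d₃ = 0 ∧ d₄ = 0) →
      ∀ p₁ p₂ p₃ p₄ : ZMod n,
        Function.Bijective (fun t : ZMod n =>
          (α₁ : ZMod n) * (p₁ + t * d₁) + (α₂ : ZMod n) * (p₂ + t * d₂) +
            (α₃ : ZMod n) * (p₃ + t * d₃) + (α₄ : ZMod n) * (p₄ + t * d₄)) := by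
  intro d₁ d₂ d₃ d₄ hd₁ hd₂ hd₃ hd₄ hd p₁ p₂ p₃ p₄
  obtain ⟨s₁, rfl⟩ := exists_signType_cast_eq hd₁
  obtain ⟨s₂, rfl⟩ := exists_signType_cast_eq hd₂
  obtain ⟨s₃, rfl⟩ := exists_signType_cast_eq hd₃
  obtain ⟨s₄, rfl⟩ := exists_signType_cast_eq hd₄
  have hs : ![s₁, s₂, s₃, s₄] ≠ 0 := by
    rintro hs
    obtain ⟨rfl, rfl, rfl, rfl, -⟩ := by simpa only [Matrix.cons_eq_zero_iff] using hs
    exact hd (by simp)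
  have hu : IsUnit ((α₁ : ZMod n) * s₁ + α₂ * s₂ + α₃ * s₃ + α₄ * s₄) := by
    have hcop := Int.isCoprime_iff_gcd_eq_one.2 (h.gcd_dotProduct_eq_one hs)
    simpa [dotProduct, Fin.sum_univ_four] using
      (ZMod.coe_int_isUnit_iff_isCoprime _ n).2 hcop.symm
  convert bijective_add_mul_right_of_isUnit hu (α₁ * p₁ + α₂ * p₂ + α₃ * p₃ + α₄ * p₄)
    using 2
  ring

/-- **Theorem 2.7.** For odd `n` and `α₁, α₂, α₃, α₄` satisfying
conditions (2.14), the hypercube `H(i,j,k,ℓ) = α₁i + α₂j + α₃k + α₄ℓ` is a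
four-dimensional pandiagonal Latin cube: along every line with direction a nonzero
vector in `{-1,0,1}⁴`, the values of `H` form a bijection of `ZMod n`. -/
theorem linear_hypercube_is_pandiagonal_latin
    (n : ℕ) (hodd : Odd n) (α₁ α₂ α₃ α₄ : ℤ) (h : Cond214 n α₁ α₂ α₃ α₄) :
    ∀ d₁ d₂ d₃ d₄ : ZMod n,
      d₁ ∈ ({-1, 0, 1} : Set (ZMod n)) →
      d₂ ∈ ({-1, 0, 1} : Set (ZMod n)) →
      d₃ ∈ ({-1, 0, 1} : Set (ZMod n)) →
      d₄ ∈ ({-1, 0, 1} : Set (ZMod n)) →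
      ¬ (d₁ = 0 ∧ d₂ = 0 ∧ d₃ = 0 ∧ d₄ = 0) →
      ∀ p₁ p₂ p₃ p₄ : ZMod n,
        Function.Bijective (fun t : ZMod n =>
          (α₁ : ZMod n) * (p₁ + t * d₁) + (α₂ : ZMod n) * (p₂ + t * d₂) +
            (α₃ : ZMod n) * (p₃ + t * d₃) + (α₄ : ZMod n) * (p₄ + t * d₄)) :=
  linear_hypercube_is_pandiagonal_latin_general n α₁ α₂ α₃ α₄ h
end

section
/- Let n ≥ 5 be an odd positive integer, let α₁, α₂ and β₁, β₂ be integers each pair satisfying conditions (2.4), and assume gcd(α₁β₂ − α₂β₁, n) = 1. Define M : (ZMod n)² → ℕ by M(i,j) = n·(α₁i+α₂j).val + (β₁i+β₂j).val, where .val denotes the canonical representative in {0,...,n−1}. Then M is a pandiagonal magic square: (a) M is injective and every value of M lies in {0, 1, ..., n²−1} (so M is a bijection onto {0,...,n²−1}); and (b) for every direction (a,b) in {(1,0), (0,1), (1,1), (1,−1)} and every point (i₀,j₀) ∈ (ZMod n)², the sum over t ∈ ZMod n of M(i₀+t·a, j₀+t·b) equals n(n²−1)/2. -/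
/-!
Write `M(i,j) = n·u + v` with `u = α₁i + α₂j` and `v = β₁i + β₂j` in `ZMod n`. Since the
determinant `α₁β₂ - α₂β₁` is a unit, `(i,j) ↦ (u,v)` is a bijection of `(ZMod n)²`, and base-`n`
digits `(u,v) ↦ n·u.val + v.val` biject `(ZMod n)²` onto `{0, …, n²-1}`. Along a line of direction
`(a,b)` the digits move as `u₀ + t·(α₁a + α₂b)` and `v₀ + t·(β₁a + β₂b)`; conditions (2.4) make
both steps units for the four directions, so each digit runs once through all of `ZMod n` and the
line sum is `(n + 1)(0 + 1 + ⋯ + (n-1)) = n(n²-1)/2`.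
-/

open Finset Function

theorem Fintype.sum_comp_add_mul_unit {R M : Type*} [Ring R] [Fintype R] [AddCommMonoid M]
    (f : R → M) (A c : R) (hc : IsUnit c) : ∑ t, f (A + t * c) = ∑ x, f x := by
  obtain ⟨u, rfl⟩ := hc
  exact Fintype.sum_equiv ((Units.mulRight u).trans (Equiv.addLeft A)) _ _ fun _ => rfl

namespace ZMod

theorem isUnit_intCast_of_gcd_eq_one_s16 {n : ℕ} {a : ℤ} (h : Int.gcd a n = 1) :
    IsUnit (a : ZMod n) :=
  (coe_int_isUnit_iff_isCoprime a n).2 (Int.isCoprime_iff_gcd_eq_one.2 (by rwa [Int.gcd_comm]))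

theorem sum_val (n : ℕ) [NeZero n] : ∑ x : ZMod n, x.val = ∑ i ∈ range n, i :=
  Finset.sum_nbij' val (fun i => (i : ZMod n)) (fun x _ => mem_range.2 x.val_lt)
    (fun _ _ => mem_univ _) (fun x _ => natCast_zmod_val x)
    (fun _ hi => val_cast_of_lt (mem_range.1 hi)) fun _ _ => rfl

theorem digits_lt (n : ℕ) [NeZero n] (u v : ZMod n) : n * u.val + v.val < n ^ 2 := by
  have hu := u.val_lt
  have hv := v.val_lt
  nlinarith

theorem digits_injective (n : ℕ) [NeZero n] :
    Injective fun p : ZMod n × ZMod n => n * p.1.val + p.2.val := by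
  rintro ⟨u, v⟩ ⟨u', v'⟩ h
  have hv : v.val = v'.val := by
    simpa [Nat.mul_add_mod, Nat.mod_eq_of_lt v.val_lt, Nat.mod_eq_of_lt v'.val_lt]
      using congrArg (· % n) h
  have hu : u.val = u'.val :=
    Nat.eq_of_mul_eq_mul_left (Nat.pos_of_neZero n) (by simp only at h; omega)
  simp [val_injective n hu, val_injective n hv]

end ZMod

theorem linearPair_injective {R : Type*} [CommRing R] {a b c d : R} (h : IsUnit (a * d - b * c)) :
    Injective fun p : R × R => (a * p.1 + b * p.2, c * p.1 + d * p.2) := by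
  rintro ⟨x, y⟩ ⟨x', y'⟩ hxy
  obtain ⟨h₁, h₂⟩ := Prod.mk.inj hxy
  have hx : (a * d - b * c) * (x - x') = 0 := by linear_combination d * h₁ - b * h₂
  have hy : (a * d - b * c) * (y - y') = 0 := by linear_combination a * h₂ - c * h₁
  rw [h.mul_right_eq_zero, sub_eq_zero] at hx hy
  rw [hx, hy]

theorem sum_range_id_mul_succ (n : ℕ) : (∑ i ∈ range n, i) * (n + 1) = n * (n ^ 2 - 1) / 2 := by
  refine (Nat.div_eq_of_eq_mul_left two_pos ?_).symm
  rw [mul_right_comm, sum_range_id_mul_two]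
  cases n with
  | zero => rfl
  | succ k =>
    rw [show (k + 1) ^ 2 = k * (k + 2) + 1 by ring, Nat.add_sub_cancel, Nat.add_sub_cancel]
    ring

def linearSquare (n : ℕ) (α₁ α₂ β₁ β₂ : ZMod n) (i j : ZMod n) : ℕ :=
  n * (α₁ * i + α₂ * j).val + (β₁ * i + β₂ * j).val

section linearSquare

variable {n : ℕ} [NeZero n] (α₁ α₂ β₁ β₂ : ZMod n)

theorem linearSquare_lt (i j : ZMod n) : linearSquare n α₁ α₂ β₁ β₂ i j < n ^ 2 :=
  ZMod.digits_lt n _ _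

theorem linearSquare_injective {α₁ α₂ β₁ β₂ : ZMod n} (h : IsUnit (α₁ * β₂ - α₂ * β₁)) :
    Injective fun v : ZMod n × ZMod n => linearSquare n α₁ α₂ β₁ β₂ v.1 v.2 :=
  (ZMod.digits_injective n).comp (linearPair_injective h)

theorem linearSquare_line_sum {a b : ZMod n} (ha : IsUnit (α₁ * a + α₂ * b))
    (hb : IsUnit (β₁ * a + β₂ * b)) (i₀ j₀ : ZMod n) :
    ∑ t : ZMod n, linearSquare n α₁ α₂ β₁ β₂ (i₀ + t * a) (j₀ + t * b) = n * (n ^ 2 - 1) / 2 := by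
  have hline : ∀ (γ₁ γ₂ : ZMod n) (t : ZMod n),
      γ₁ * (i₀ + t * a) + γ₂ * (j₀ + t * b) = (γ₁ * i₀ + γ₂ * j₀) + t * (γ₁ * a + γ₂ * b) :=
    fun _ _ _ => by ring
  simp only [linearSquare, hline, sum_add_distrib, ← mul_sum,
    Fintype.sum_comp_add_mul_unit ZMod.val _ _ ha, Fintype.sum_comp_add_mul_unit ZMod.val _ _ hb,
    ZMod.sum_val, ← sum_range_id_mul_succ]
  ring

end linearSquare

theorem magic_pandiagonal_square_general
    (n : ℕ) [NeZero n] (α₁ α₂ β₁ β₂ : ℤ)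
    (hα1 : Int.gcd α₁ n = 1) (hα2 : Int.gcd α₂ n = 1)
    (hα3 : Int.gcd (α₁ + α₂) n = 1) (hα4 : Int.gcd (α₁ - α₂) n = 1)
    (hβ1 : Int.gcd β₁ n = 1) (hβ2 : Int.gcd β₂ n = 1)
    (hβ3 : Int.gcd (β₁ + β₂) n = 1) (hβ4 : Int.gcd (β₁ - β₂) n = 1)
    (hd : Int.gcd (α₁ * β₂ - α₂ * β₁) n = 1)
    (M : ZMod n → ZMod n → ℕ)
    (hM : ∀ i j : ZMod n,
      M i j = n * ((α₁ : ZMod n) * i + (α₂ : ZMod n) * j).val +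
        ((β₁ : ZMod n) * i + (β₂ : ZMod n) * j).val) :
    (Function.Injective fun v : ZMod n × ZMod n => M v.1 v.2) ∧
    (∀ i j : ZMod n, M i j < n ^ 2) ∧
    (∀ a b : ZMod n,
      (a, b) ∈ ({(1, 0), (0, 1), (1, 1), (1, -1)} : Set (ZMod n × ZMod n)) →
      ∀ i₀ j₀ : ZMod n,
        ∑ t : ZMod n, M (i₀ + t * a) (j₀ + t * b) = n * (n ^ 2 - 1) / 2) := by
  obtain rfl : M = linearSquare n α₁ α₂ β₁ β₂ := funext₂ hM
  have unit {x : ℤ} (hx : Int.gcd x n = 1) : IsUnit (x : ZMod n) :=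
    ZMod.isUnit_intCast_of_gcd_eq_one_s16 hx
  refine ⟨linearSquare_injective (by exact_mod_cast unit hd), linearSquare_lt _ _ _ _,
    fun a b hab i₀ j₀ => ?_⟩
  simp only [Set.mem_insert_iff, Set.mem_singleton_iff, Prod.mk.injEq] at hab
  rcases hab with ⟨rfl, rfl⟩ | ⟨rfl, rfl⟩ | ⟨rfl, rfl⟩ | ⟨rfl, rfl⟩
  · exact linearSquare_line_sum _ _ _ _ (by simpa using unit hα1) (by simpa using unit hβ1) _ _
  · exact linearSquare_line_sum _ _ _ _ (by simpa using unit hα2) (by simpa using unit hβ2) _ _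
  · exact linearSquare_line_sum _ _ _ _ (by simpa using unit hα3) (by simpa using unit hβ3) _ _
  · exact linearSquare_line_sum _ _ _ _ (by simpa [sub_eq_add_neg] using unit hα4)
      (by simpa [sub_eq_add_neg] using unit hβ4) _ _

/-- **Theorem 3.1.** For odd `n ≥ 5`, pairs `(α₁,α₂)` and `(β₁,β₂)` each
satisfying conditions (2.4), and determinant `α₁β₂ - α₂β₁` coprime to `n`, the array
`M(i,j) = n·(α₁i+α₂j).val + (β₁i+β₂j).val` is a pandiagonal magic square: it is a
bijection onto `{0, …, n²-1}` and every ROW (row, column, diagonal or broken diagonal)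
sums to `n(n²-1)/2`. -/
theorem magic_pandiagonal_square
    (n : ℕ) (hn : 5 ≤ n) (hodd : Odd n) [NeZero n] (α₁ α₂ β₁ β₂ : ℤ)
    (hα1 : Int.gcd α₁ n = 1) (hα2 : Int.gcd α₂ n = 1)
    (hα3 : Int.gcd (α₁ + α₂) n = 1) (hα4 : Int.gcd (α₁ - α₂) n = 1)
    (hβ1 : Int.gcd β₁ n = 1) (hβ2 : Int.gcd β₂ n = 1)
    (hβ3 : Int.gcd (β₁ + β₂) n = 1) (hβ4 : Int.gcd (β₁ - β₂) n = 1)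
    (hd : Int.gcd (α₁ * β₂ - α₂ * β₁) n = 1)
    (M : ZMod n → ZMod n → ℕ)
    (hM : ∀ i j : ZMod n,
      M i j = n * ((α₁ : ZMod n) * i + (α₂ : ZMod n) * j).val +
        ((β₁ : ZMod n) * i + (β₂ : ZMod n) * j).val) :
    (Function.Injective fun v : ZMod n × ZMod n => M v.1 v.2) ∧
    (∀ i j : ZMod n, M i j < n ^ 2) ∧
    (∀ a b : ZMod n,
      (a, b) ∈ ({(1, 0), (0, 1), (1, 1), (1, -1)} : Set (ZMod n × ZMod n)) →
      ∀ i₀ j₀ : ZMod n,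
        ∑ t : ZMod n, M (i₀ + t * a) (j₀ + t * b) = n * (n ^ 2 - 1) / 2) :=
  magic_pandiagonal_square_general n α₁ α₂ β₁ β₂ hα1 hα2 hα3 hα4 hβ1 hβ2 hβ3 hβ4 hd M hM
end

section
/- Let n be an odd positive integer and for q = 1,2,3 let α₁q, α₂q, α₃q be integers, each triple satisfying conditions (2.9), and assume the determinant d₃ of the 3×3 matrix (αₚq) satisfies gcd(d₃,n) = 1. Define M : (ZMod n)³ → ℕ by M(i,j,k) = n²·C⁽¹⁾(i,j,k).val + n·C⁽²⁾(i,j,k).val + C⁽³⁾(i,j,k).val, where C⁽q⁾(i,j,k) = α₁q·i + α₂q·j + α₃q·k in ZMod n and .val denotes the canonical representative in {0,...,n−1}. Then M is a pandiagonal magic cube: (a) M is injective and every value of M lies in {0, 1, ..., n³−1} (so M is a bijection onto {0,...,n³−1}); and (b) for every direction vector d ∈ {−1,0,1}³ with d ≠ 0 and every point p ∈ (ZMod n)³, the sum over t ∈ ZMod n of M(p + t·d) equals n(n³−1)/2. -/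
lemma ZMod.isUnit_intCast_iff_gcd_eq_one {n : ℕ} {a : ℤ} :
    IsUnit (a : ZMod n) ↔ Int.gcd a n = 1 :=
  (coe_int_isUnit_iff_isCoprime a n).trans (isCoprime_comm.trans Int.isCoprime_iff_gcd_eq_one)

/-- Up to sign, the thirteen nonzero vectors of `{-1, 0, 1}³` give exactly the thirteen linear
forms of conditions (2.9). -/
lemma Cond29.isUnit_linear_form {n : ℕ} {α₁ α₂ α₃ : ℤ} (h : Cond29 n α₁ α₂ α₃)
    {d₁ d₂ d₃ : ZMod n} (hd₁ : d₁ ∈ ({-1, 0, 1} : Set (ZMod n)))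
    (hd₂ : d₂ ∈ ({-1, 0, 1} : Set (ZMod n))) (hd₃ : d₃ ∈ ({-1, 0, 1} : Set (ZMod n)))
    (hne : ¬ (d₁ = 0 ∧ d₂ = 0 ∧ d₃ = 0)) :
    IsUnit ((α₁ : ZMod n) * d₁ + α₂ * d₂ + α₃ * d₃) := by
  simp only [Cond29, ← ZMod.isUnit_intCast_iff_gcd_eq_one, Int.cast_add, Int.cast_sub,
    Int.cast_mul, Int.cast_ofNat] at h
  ring_nf at h
  simp only [Set.mem_insert_iff, Set.mem_singleton_iff] at hd₁ hd₂ hd₃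
  rcases hd₁ with rfl | rfl | rfl <;> rcases hd₂ with rfl | rfl | rfl <;>
    rcases hd₃ with rfl | rfl | rfl
  all_goals first
    | exact absurd ⟨rfl, rfl, rfl⟩ hne
    | (ring_nf; tauto)
    | (rw [← IsUnit.neg_iff]; ring_nf; tauto)

lemma Fintype.sum_comp_affine {R M : Type*} [Ring R] [Fintype R] [AddCommMonoid M]
    {β : R} (hβ : IsUnit β) (c : R) (f : R → M) :
    ∑ t, f (c + β * t) = ∑ x, f x :=
  Fintype.sum_equiv ((Units.mulLeft hβ.unit).trans (Equiv.addLeft c)) _ f fun _ => rfl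

lemma Cond29.sum_val_along_line {n : ℕ} [NeZero n] {α₁ α₂ α₃ : ℤ} (h : Cond29 n α₁ α₂ α₃)
    {d₁ d₂ d₃ : ZMod n} (hd₁ : d₁ ∈ ({-1, 0, 1} : Set (ZMod n)))
    (hd₂ : d₂ ∈ ({-1, 0, 1} : Set (ZMod n))) (hd₃ : d₃ ∈ ({-1, 0, 1} : Set (ZMod n)))
    (hne : ¬ (d₁ = 0 ∧ d₂ = 0 ∧ d₃ = 0)) (p₁ p₂ p₃ : ZMod n) :
    ∑ t : ZMod n, ((α₁ : ZMod n) * (p₁ + t * d₁) + α₂ * (p₂ + t * d₂) + α₃ * (p₃ + t * d₃)).val =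
      ∑ x : ZMod n, x.val := by
  refine (Finset.sum_congr rfl fun t _ => ?_).trans <|
    Fintype.sum_comp_affine (h.isUnit_linear_form hd₁ hd₂ hd₃ hne) (α₁ * p₁ + α₂ * p₂ + α₃ * p₃) _
  congr 1
  ring

lemma ZMod.sum_val_mul_two (n : ℕ) [NeZero n] : (∑ x : ZMod n, x.val) * 2 = n * (n - 1) := by
  obtain ⟨k, rfl⟩ : ∃ k, n = k + 1 := Nat.exists_eq_succ_of_ne_zero (NeZero.ne n)
  rw [← Finset.sum_range_id_mul_two, ← Fin.sum_univ_eq_sum_range]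
  rfl -- `ZMod (k + 1)` is `Fin (k + 1)`, with `ZMod.val = Fin.val`

lemma magic_constant_of_digit_sum {n S : ℕ} (hS : S * 2 = n * (n - 1)) :
    n ^ 2 * S + n * S + S = n * (n ^ 3 - 1) / 2 := by
  rcases n with _ | k
  · simp_all
  rw [Nat.add_sub_cancel] at hS
  refine (Nat.div_eq_of_eq_mul_left two_pos ?_).symm
  have hcube : (k + 1) ^ 3 - 1 = k * (k ^ 2 + 3 * k + 3) := by
    rw [show (k + 1) ^ 3 = k * (k ^ 2 + 3 * k + 3) + 1 by ring, Nat.add_sub_cancel]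
  calc (k + 1) * ((k + 1) ^ 3 - 1)
      = ((k + 1) ^ 2 + (k + 1) + 1) * ((k + 1) * k) := by rw [hcube]; ring
    _ = ((k + 1) ^ 2 * S + (k + 1) * S + S) * 2 := by rw [← hS]; ring

lemma Nat.eq_and_eq_of_mul_add_eq {n q r q' r' : ℕ} (hr : r < n) (hr' : r' < n)
    (h : n * q + r = n * q' + r') : q = q' ∧ r = r' := by
  have hn : 0 < n := by omega
  obtain ⟨h₁, h₂⟩ := (Nat.div_mod_unique hn).2 ⟨(add_comm r (n * q)).trans h, hr⟩
  obtain ⟨h₃, h₄⟩ := (Nat.div_mod_unique hn).2 ⟨add_comm r' (n * q'), hr'⟩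
  exact ⟨h₁.symm.trans h₃, h₂.symm.trans h₄⟩

lemma Nat.eq_of_sq_mul_add_mul_add_eq {n a b c a' b' c' : ℕ} (hb : b < n) (hc : c < n)
    (hb' : b' < n) (hc' : c' < n) (h : n ^ 2 * a + n * b + c = n ^ 2 * a' + n * b' + c') :
    a = a' ∧ b = b' ∧ c = c' := by
  obtain ⟨hab, hc⟩ :=
    Nat.eq_and_eq_of_mul_add_eq (q := n * a + b) (q' := n * a' + b') hc hc' (by linarith)
  obtain ⟨ha, hb⟩ := Nat.eq_and_eq_of_mul_add_eq hb hb' hab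
  exact ⟨ha, hb, hc⟩

lemma Nat.sq_mul_add_mul_add_lt_cube {n a b c : ℕ} (ha : a < n) (hb : b < n) (hc : c < n) :
    n ^ 2 * a + n * b + c < n ^ 3 := by
  nlinarith

lemma Matrix.vecMul_intCast_injective {ι : Type*} [Fintype ι] [DecidableEq ι] {n : ℕ}
    (A : Matrix ι ι ℤ) (h : Int.gcd A.det n = 1) :
    Function.Injective fun v : ι → ZMod n => Matrix.vecMul v (A.map Int.cast) :=
  vecMul_injective_of_isUnit <| (isUnit_iff_isUnit_det _).2 <| by
    rw [← Int.cast_det]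
    exact ZMod.isUnit_intCast_iff_gcd_eq_one.2 h

theorem magic_pandiagonal_cube_general
    (n : ℕ) [NeZero n] (α : Fin 3 → Fin 3 → ℤ)
    (hc : ∀ q : Fin 3, Cond29 n (α 0 q) (α 1 q) (α 2 q))
    (hdet : Int.gcd (Matrix.det (Matrix.of fun p q : Fin 3 => α p q)) n = 1)
    (C : Fin 3 → ZMod n → ZMod n → ZMod n → ZMod n)
    (hC : ∀ q i j k, C q i j k =
      (α 0 q : ZMod n) * i + (α 1 q : ZMod n) * j + (α 2 q : ZMod n) * k)
    (M : ZMod n → ZMod n → ZMod n → ℕ)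
    (hM : ∀ i j k, M i j k =
      n ^ 2 * (C 0 i j k).val + n * (C 1 i j k).val + (C 2 i j k).val) :
    (Function.Injective fun v : ZMod n × ZMod n × ZMod n => M v.1 v.2.1 v.2.2) ∧
    (∀ i j k : ZMod n, M i j k < n ^ 3) ∧
    (∀ d₁ d₂ d₃ : ZMod n,
      d₁ ∈ ({-1, 0, 1} : Set (ZMod n)) →
      d₂ ∈ ({-1, 0, 1} : Set (ZMod n)) →
      d₃ ∈ ({-1, 0, 1} : Set (ZMod n)) →
      ¬ (d₁ = 0 ∧ d₂ = 0 ∧ d₃ = 0) →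
      ∀ p₁ p₂ p₃ : ZMod n,
        ∑ t : ZMod n, M (p₁ + t * d₁) (p₂ + t * d₂) (p₃ + t * d₃) =
          n * (n ^ 3 - 1) / 2) := by
  have hC_vecMul : ∀ q i j k, C q i j k = Matrix.vecMul ![i, j, k] ((Matrix.of α).map Int.cast) q := by
    intro q i j k
    simp [hC, Matrix.vecMul, dotProduct, Fin.sum_univ_three, mul_comm]
  refine ⟨?_, fun i j k => ?_, fun d₁ d₂ d₃ hd₁ hd₂ hd₃ hne p₁ p₂ p₃ => ?_⟩
  · rintro ⟨i, j, k⟩ ⟨i', j', k'⟩ h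
    obtain ⟨h₀, h₁, h₂⟩ := Nat.eq_of_sq_mul_add_mul_add_eq (ZMod.val_lt _) (ZMod.val_lt _)
      (ZMod.val_lt _) (ZMod.val_lt _) (by simpa only [hM] using h)
    have hdigits : ∀ q, C q i j k = C q i' j' k' := by
      intro q
      fin_cases q <;> apply ZMod.val_injective <;> assumption
    have := Matrix.vecMul_intCast_injective _ hdet <| funext fun q => by
      simpa only [hC_vecMul] using hdigits q
    simpa using this
  · rw [hM]
    exact Nat.sq_mul_add_mul_add_lt_cube (ZMod.val_lt _) (ZMod.val_lt _) (ZMod.val_lt _)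
  · have hline : ∀ q, ∑ t : ZMod n, (C q (p₁ + t * d₁) (p₂ + t * d₂) (p₃ + t * d₃)).val =
        ∑ x : ZMod n, x.val := fun q => by
      simpa only [hC] using (hc q).sum_val_along_line hd₁ hd₂ hd₃ hne p₁ p₂ p₃
    simp only [hM, Finset.sum_add_distrib, ← Finset.mul_sum, hline]
    exact magic_constant_of_digit_sum (ZMod.sum_val_mul_two n)

/-- **Theorem 3.2.** For odd `n`, three triples `(α₁q,α₂q,α₃q)` each
satisfying conditions (2.9) with determinant coprime to `n`, the array
`M = n²·C⁽¹⁾.val + n·C⁽²⁾.val + C⁽³⁾.val` (with `C⁽q⁾(i,j,k) = α₁q·i + α₂q·j + α₃q·k`)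
is a pandiagonal magic cube: a bijection onto `{0, …, n³-1}` in which every line with
direction a nonzero vector in `{-1,0,1}³` sums to `n(n³-1)/2`. -/
theorem magic_pandiagonal_cube
    (n : ℕ) (hodd : Odd n) [NeZero n] (α : Fin 3 → Fin 3 → ℤ)
    (hc : ∀ q : Fin 3, Cond29 n (α 0 q) (α 1 q) (α 2 q))
    (hdet : Int.gcd (Matrix.det (Matrix.of fun p q : Fin 3 => α p q)) n = 1)
    (C : Fin 3 → ZMod n → ZMod n → ZMod n → ZMod n)
    (hC : ∀ q i j k, C q i j k =
      (α 0 q : ZMod n) * i + (α 1 q : ZMod n) * j + (α 2 q : ZMod n) * k)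
    (M : ZMod n → ZMod n → ZMod n → ℕ)
    (hM : ∀ i j k, M i j k =
      n ^ 2 * (C 0 i j k).val + n * (C 1 i j k).val + (C 2 i j k).val) :
    (Function.Injective fun v : ZMod n × ZMod n × ZMod n => M v.1 v.2.1 v.2.2) ∧
    (∀ i j k : ZMod n, M i j k < n ^ 3) ∧
    (∀ d₁ d₂ d₃ : ZMod n,
      d₁ ∈ ({-1, 0, 1} : Set (ZMod n)) →
      d₂ ∈ ({-1, 0, 1} : Set (ZMod n)) →
      d₃ ∈ ({-1, 0, 1} : Set (ZMod n)) →
      ¬ (d₁ = 0 ∧ d₂ = 0 ∧ d₃ = 0) →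
      ∀ p₁ p₂ p₃ : ZMod n,
        ∑ t : ZMod n, M (p₁ + t * d₁) (p₂ + t * d₂) (p₃ + t * d₃) =
          n * (n ^ 3 - 1) / 2) :=
  magic_pandiagonal_cube_general n α hc hdet C hC M hM
end
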